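/- Let f: X → Y and g: Y → X be 𝒯-functors between L-separated 𝒯-categories with f ⊣ g. Then: (1) f is an epimorphism in Cat_sep 𝒯 iff f·g = 1_Y iff f is a split epimorphism in Cat_sep 𝒯; (2) f is a monomorphism in Cat_sep 𝒯 iff g·f = 1_X iff f is a split monomorphism in Cat_sep 𝒯. -/

import Mathlib

universe u

namespace Paper

/-- A strict topological theory `𝒯 = (𝕋, V, ξ)`: a commutative unital quantale `V`
(a complete lattice with a commutative monoid structure whose multiplication preserves
suprema in each variable, with `⊥ < k`), a `Set`-monad `𝕋 = (T, e, m)` such that `T`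
sends pullbacks to weak pullbacks and the naturality squares of `m` are weak pullbacks,
and a `𝕋`-algebra structure `ξ : T V → V` for which `⊗` and `k` are `𝕋`-algebra
homomorphisms and `ξ_X := ξ ∘ T(-)` is a (monotone) natural transformation
`P_V → P_V T`. -/
structure TopTheory (V : Type u) [CompleteLattice V] (T : Type u → Type u) where
  tens : V → V → V
  unit : V
  tens_comm : ∀ u v : V, tens u v = tens v u
  tens_assoc : ∀ u v w : V, tens (tens u v) w = tens u (tens v w)
  unit_tens : ∀ v : V, tens unit v = v
  tens_sSup : ∀ (u : V) (S : Set V), tens u (sSup S) = ⨆ v ∈ S, tens u v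
  bot_lt_unit : (⊥ : V) < unit
  map : ∀ {X Y : Type u}, (X → Y) → T X → T Y
  map_id : ∀ {X : Type u}, map (id : X → X) = id
  map_comp : ∀ {X Y Z : Type u} (g : Y → Z) (f : X → Y) (𝔵 : T X),
    map (g ∘ f) 𝔵 = map g (map f 𝔵)
  e : ∀ {X : Type u}, X → T X
  m : ∀ {X : Type u}, T (T X) → T X
  e_nat : ∀ {X Y : Type u} (f : X → Y) (x : X), map f (e x) = e (f x)
  m_nat : ∀ {X Y : Type u} (f : X → Y) (𝔛 : T (T X)), map f (m 𝔛) = m (map (map f) 𝔛)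
  m_e : ∀ {X : Type u} (𝔵 : T X), m (e 𝔵) = 𝔵
  m_map_e : ∀ {X : Type u} (𝔵 : T X), m (map e 𝔵) = 𝔵
  m_assoc : ∀ {X : Type u} (𝔜 : T (T (T X))), m (m 𝔜) = m (map m 𝔜)
  /-- (BC): `T` sends pullbacks to weak pullbacks. -/
  map_bc : ∀ {X Y Z : Type u} (f : X → Z) (g : Y → Z) (𝔵 : T X) (𝔶 : T Y),
    map f 𝔵 = map g 𝔶 →
    ∃ 𝔴 : T {p : X × Y // f p.1 = g p.2},
      map (fun p => p.1.1) 𝔴 = 𝔵 ∧ map (fun p => p.1.2) 𝔴 = 𝔶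
  /-- (BC): every naturality square of `m` is a weak pullback. -/
  m_bc : ∀ {X Y : Type u} (f : X → Y) (𝔜 : T (T Y)) (𝔵 : T X),
    m 𝔜 = map f 𝔵 → ∃ 𝔛 : T (T X), map (map f) 𝔛 = 𝔜 ∧ m 𝔛 = 𝔵
  xi : T V → V
  xi_e : ∀ v : V, xi (e v) = v
  xi_m : ∀ 𝔙 : T (T V), xi (m 𝔙) = xi (map xi 𝔙)
  /-- `k : 1 → V` is a `𝕋`-algebra homomorphism. -/
  xi_unit : ∀ {X : Type u} (𝔵 : T X), xi (map (fun _ => unit) 𝔵) = unit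
  /-- `⊗ : V × V → V` is a `𝕋`-algebra homomorphism. -/
  xi_tens : ∀ 𝔴 : T (V × V),
    xi (map (fun p => tens p.1 p.2) 𝔴) = tens (xi (map Prod.fst 𝔴)) (xi (map Prod.snd 𝔴))
  /-- each component `ξ_X : V^X → V^{T X}` is monotone. -/
  xi_mono : ∀ {X : Type u} (φ φ' : X → V), (∀ x, φ x ≤ φ' x) →
    ∀ 𝔵 : T X, xi (map φ 𝔵) ≤ xi (map φ' 𝔵)
  /-- `ξ_X` is a natural transformation `P_V → P_V T`. -/
  xi_nat : ∀ {X Y : Type u} (f : X → Y) (φ : X → V) (𝔶 : T Y),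
    (⨆ 𝔵 : {𝔵 : T X // map f 𝔵 = 𝔶}, xi (map φ 𝔵.1)) =
      xi (map (fun y => ⨆ x : {x : X // f x = y}, φ x.1) 𝔶)

namespace TopTheory

variable {V : Type u} [CompleteLattice V] {T : Type u → Type u}

/-- The internal hom of the quantale: `u ⊗ (-) ⊣ hom (u, -)`. -/
def ihom (𝒯 : TopTheory V T) (u w : V) : V := sSup {z | 𝒯.tens u z ≤ w}

/-- The extension `T_ξ` of `T : Set → Set` to `V`-relations. -/
def Txi (𝒯 : TopTheory V T) {X Y : Type u} (r : X → Y → V) (𝔵 : T X) (𝔶 : T Y) : V :=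
  ⨆ 𝔴 : {w : T (X × Y) // 𝒯.map Prod.fst w = 𝔵 ∧ 𝒯.map Prod.snd w = 𝔶},
    𝒯.xi (𝒯.map (fun p => r p.1 p.2) 𝔴.1)

/-- Kleisli convolution `β ∘ α = β · T_ξ α · m_X°` of `𝒯`-relations
`α : X ⇸ Y` and `β : Y ⇸ Z`. -/
def kleisli (𝒯 : TopTheory V T) {X Y Z : Type u}
    (β : T Y → Z → V) (α : T X → Y → V) (𝔵 : T X) (z : Z) : V :=
  ⨆ 𝔛 : {𝔛 : T (T X) // 𝒯.m 𝔛 = 𝔵}, ⨆ 𝔶 : T Y, 𝒯.tens (𝒯.Txi α 𝔛.1 𝔶) (β 𝔶 z)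

/-- The `𝒯`-relation `e_X° : X ⇸ X`. -/
def unitRel (𝒯 : TopTheory V T) (X : Type u) (𝔵 : T X) (x : X) : V :=
  ⨆ _ : 𝔵 = 𝒯.e x, 𝒯.unit

/-- A `𝒯`-category structure on `X`: a `𝒯`-relation `a : X ⇸ X` with
`e_X° ≤ a` and `a ∘ a ≤ a`. -/
structure TCatStr (𝒯 : TopTheory V T) (X : Type u) where
  rel : T X → X → V
  le_refl : ∀ x : X, 𝒯.unit ≤ rel (𝒯.e x) x
  comp : ∀ (𝔵 : T X) (x : X), 𝒯.kleisli rel rel 𝔵 x ≤ rel 𝔵 x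

/-- The `𝒯`-module conditions `φ ∘ a ≤ φ` and `b ∘ φ ≤ φ` for a `𝒯`-relation
`φ : X ⇸ Y` between (structures underlying) `𝒯`-categories `(X,a)` and `(Y,b)`. -/
def IsTModRel (𝒯 : TopTheory V T) {X Y : Type u}
    (a : T X → X → V) (b : T Y → Y → V) (φ : T X → Y → V) : Prop :=
  (∀ 𝔵 y, 𝒯.kleisli φ a 𝔵 y ≤ φ 𝔵 y) ∧ (∀ 𝔵 y, 𝒯.kleisli b φ 𝔵 y ≤ φ 𝔵 y)

variable {𝒯 : TopTheory V T}

/-- `f_* = b · T f`. -/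
def modStar {X Y : Type u} (b : 𝒯.TCatStr Y) (f : X → Y) (𝔵 : T X) (y : Y) : V :=
  b.rel (𝒯.map f 𝔵) y

/-- `f^* = f° · b`. -/
def modCostar {X Y : Type u} (b : 𝒯.TCatStr Y) (f : X → Y) (𝔶 : T Y) (x : X) : V :=
  b.rel 𝔶 (f x)

/-- The extension `φ ⟜ ψ` of `φ : X ⇸∘ Y` along `ψ : X ⇸∘ Z`, given by
`(φ ⟜ ψ)(𝔷,y) = ⋀_{𝔵 ∈ T X} hom((T_ξ ψ · m_X°)(𝔵,𝔷), φ(𝔵,y))`. -/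
def extend (𝒯 : TopTheory V T) {X Y Z : Type u}
    (φ : T X → Y → V) (ψ : T X → Z → V) (𝔷 : T Z) (y : Y) : V :=
  ⨅ 𝔵 : T X, 𝒯.ihom (⨆ 𝔛 : {𝔛 : T (T X) // 𝒯.m 𝔛 = 𝔵}, 𝒯.Txi ψ 𝔛.1 𝔷) (φ 𝔵 y)

/-- A `𝒯`-functor `f : (X,a) → (Y,b)`. -/
def IsTFunctor {X Y : Type u} (a : 𝒯.TCatStr X) (b : 𝒯.TCatStr Y) (f : X → Y) : Prop :=
  ∀ (𝔵 : T X) (x : X), a.rel 𝔵 x ≤ b.rel (𝒯.map f 𝔵) (f x)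

/-- A fully faithful `𝒯`-functor. -/
def FullyFaithful {X Y : Type u} (a : 𝒯.TCatStr X) (b : 𝒯.TCatStr Y) (f : X → Y) : Prop :=
  ∀ (𝔵 : T X) (x : X), a.rel 𝔵 x = b.rel (𝒯.map f 𝔵) (f x)

/-- The order `f ≤ g ⟺ f^* ≤ g^*` on `𝒯`-functors `X → (Y,b)`. -/
def funLE {X Y : Type u} (b : 𝒯.TCatStr Y) (f g : X → Y) : Prop :=
  ∀ (𝔶 : T Y) (x : X), b.rel 𝔶 (f x) ≤ b.rel 𝔶 (g x)

/-- Equivalence `f ≅ g ⟺ f^* = g^*` of `𝒯`-functors `X → (Y,b)`. -/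
def FunEquiv {X Y : Type u} (b : 𝒯.TCatStr Y) (f g : X → Y) : Prop :=
  ∀ (𝔶 : T Y) (x : X), b.rel 𝔶 (f x) = b.rel 𝔶 (g x)

/-- `f ⊣ g`:  `1_X ≤ g·f` and `f·g ≤ 1_Y`. -/
def IsAdjunction {X Y : Type u} (a : 𝒯.TCatStr X) (b : 𝒯.TCatStr Y)
    (f : X → Y) (g : Y → X) : Prop :=
  (∀ (𝔵 : T X) (x : X), a.rel 𝔵 x ≤ a.rel 𝔵 (g (f x))) ∧
    (∀ (𝔶 : T Y) (y : Y), b.rel 𝔶 (f (g y)) ≤ b.rel 𝔶 y)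

/-- A left adjoint `𝒯`-functor. -/
def IsLeftAdjoint {X Y : Type u} (a : 𝒯.TCatStr X) (b : 𝒯.TCatStr Y) (f : X → Y) : Prop :=
  IsTFunctor a b f ∧ ∃ g : Y → X, IsTFunctor b a g ∧ IsAdjunction a b f g

/-- L-separatedness: equivalent `𝒯`-functors into `X` are equal. -/
def Separated {X : Type u} (a : 𝒯.TCatStr X) : Prop :=
  ∀ (A : Type u) (as : 𝒯.TCatStr A) (f g : A → X),
    IsTFunctor as a f → IsTFunctor as a g → FunEquiv a f g → f = g

/-- Injectivity with respect to fully faithful `𝒯`-functors. -/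
def Injective {X : Type u} (a : 𝒯.TCatStr X) : Prop :=
  ∀ (A B : Type u) (as : 𝒯.TCatStr A) (bs : 𝒯.TCatStr B) (f : A → X) (i : A → B),
    IsTFunctor as a f → IsTFunctor as bs i → FullyFaithful as bs i →
      ∃ g : B → X, IsTFunctor bs a g ∧ FunEquiv a (g ∘ i) f

/-- `g : Z → X` is the `ψ`-weighted colimit of `h : A → X`, i.e. `g_* = h_* ⟜ ψ`. -/
def IsColimit {X A Z : Type u} (a : 𝒯.TCatStr X) (h : A → X) (ψ : T A → Z → V)
    (g : Z → X) : Prop :=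
  ∀ (𝔷 : T Z) (x : X), modStar a g 𝔷 x = 𝒯.extend (modStar a h) ψ 𝔷 x

/-- Cocompleteness: every weighted diagram has a colimit. -/
def Cocomplete {X : Type u} (a : 𝒯.TCatStr X) : Prop :=
  ∀ (A Z : Type u) (as : 𝒯.TCatStr A) (cs : 𝒯.TCatStr Z) (h : A → X),
    IsTFunctor as a h → ∀ ψ : T A → Z → V, 𝒯.IsTModRel as.rel cs.rel ψ →
      ∃ g : Z → X, IsTFunctor cs a g ∧ IsColimit a h ψ g

/-- Cocontinuity: preservation of all weighted colimits. -/
def Cocontinuous {X Y : Type u} (a : 𝒯.TCatStr X) (b : 𝒯.TCatStr Y) (f : X → Y) : Prop :=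
  ∀ (A Z : Type u) (as : 𝒯.TCatStr A) (cs : 𝒯.TCatStr Z) (h : A → X)
    (ψ : T A → Z → V) (g : Z → X),
    IsTFunctor as a h → 𝒯.IsTModRel as.rel cs.rel ψ → IsTFunctor cs a g →
      IsColimit a h ψ g → IsColimit b (f ∘ h) ψ (f ∘ g)

/-- A presheaf on `(X,a)`: a `𝒯`-module `X ⇸∘ G`, where `G = (1, e_1°)`. -/
def IsPresheaf {X : Type u} (a : 𝒯.TCatStr X) (ψ : T X → V) : Prop :=
  𝒯.IsTModRel a.rel (𝒯.unitRel PUnit) (fun 𝔵 _ => ψ 𝔵)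

/-- The underlying set of the presheaf `𝒯`-category `X̂`. -/
def Hat {X : Type u} (a : 𝒯.TCatStr X) : Type u := {ψ : T X → V // IsPresheaf a ψ}

/-- The `𝒯`-category structure `⟦-,-⟧` of `V^{|X|}`. -/
def powRel (𝒯 : TopTheory V T) (X : Type u) (𝔭 : T (T X → V)) (ψ : T X → V) : V :=
  ⨅ 𝔮 : {q : T ((T X) × (T X → V)) // 𝒯.map Prod.snd q = 𝔭},
    𝒯.ihom (𝒯.xi (𝒯.map (fun p => p.2 p.1) 𝔮.1)) (ψ (𝒯.m (𝒯.map Prod.fst 𝔮.1)))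

/-- `hs` is the `𝒯`-category structure on `X̂` inherited from `V^{|X|}`. -/
def IsHatStr {X : Type u} (a : 𝒯.TCatStr X) (hs : 𝒯.TCatStr (Hat a)) : Prop :=
  ∀ (𝔭 : T (Hat a)) (ψ : Hat a), hs.rel 𝔭 ψ = 𝒯.powRel X (𝒯.map Subtype.val 𝔭) ψ.1

/-- `y` is the Yoneda functor `X → X̂`, `y x = a(-,x)`. -/
def IsYoneda {X : Type u} (a : 𝒯.TCatStr X) (y : X → Hat a) : Prop :=
  ∀ (x : X) (𝔵 : T X), (y x).1 𝔵 = a.rel 𝔵 x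

/-- The underlying map `ψ ↦ ψ ∘ f^*` of `f̂ : X̂ → Ŷ`. -/
def hatMapRel {X Y : Type u} (b : 𝒯.TCatStr Y) (f : X → Y) (ψ : T X → V) (𝔶 : T Y) : V :=
  𝒯.kleisli (fun 𝔵 (_ : PUnit.{u + 1}) => ψ 𝔵) (modCostar b f) 𝔶 PUnit.unit

/-- `fh` is the `𝒯`-functor `f̂ : X̂ → Ŷ`, with underlying map `ψ ↦ ψ ∘ f^*`. -/
def IsHatMap {X Y : Type u} (a : 𝒯.TCatStr X) (b : 𝒯.TCatStr Y) (f : X → Y)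
    (fh : Hat a → Hat b) : Prop :=
  ∀ (ψ : Hat a) (𝔶 : T Y), (fh ψ).1 𝔶 = hatMapRel b f ψ.1 𝔶

/-- An inhabited `𝒯`-module: `k ≤ ⋀_y ⋁_𝔵 φ(𝔵,y)`. -/
def InhabitedMod (𝒯 : TopTheory V T) {X Y : Type u} (φ : T X → Y → V) : Prop :=
  𝒯.unit ≤ ⨅ y : Y, ⨆ 𝔵 : T X, φ 𝔵 y

/-- A dense `𝒯`-functor: `f_*` is inhabited. -/
def Dense {X Y : Type u} (b : 𝒯.TCatStr Y) (f : X → Y) : Prop :=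
  𝒯.InhabitedMod (modStar b f)

/-- The underlying set of `X⁺ = {ψ ∈ X̂ ∣ ψ inhabited}`. -/
def Plus {X : Type u} (a : 𝒯.TCatStr X) : Type u :=
  {ψ : Hat a // 𝒯.InhabitedMod (fun 𝔵 (_ : PUnit.{u + 1}) => ψ.1 𝔵)}

/-- `ps` is the `𝒯`-category structure on `X⁺` inherited from `X̂`. -/
def IsPlusStr {X : Type u} (a : 𝒯.TCatStr X) (hs : 𝒯.TCatStr (Hat a))
    (ps : 𝒯.TCatStr (Plus a)) : Prop :=
  ∀ (𝔭 : T (Plus a)) (ψ : Plus a), ps.rel 𝔭 ψ = hs.rel (𝒯.map Subtype.val 𝔭) ψ.1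

/-- Inhabited-cocompleteness: all colimits with inhabited weights exist. -/
def ICocomplete {X : Type u} (a : 𝒯.TCatStr X) : Prop :=
  ∀ (A Z : Type u) (as : 𝒯.TCatStr A) (cs : 𝒯.TCatStr Z) (h : A → X),
    IsTFunctor as a h → ∀ ψ : T A → Z → V, 𝒯.IsTModRel as.rel cs.rel ψ →
      𝒯.InhabitedMod ψ → ∃ g : Z → X, IsTFunctor cs a g ∧ IsColimit a h ψ g

/-- Inhabited-cocontinuity: preservation of all colimits with inhabited weights. -/
def ICocontinuous {X Y : Type u} (a : 𝒯.TCatStr X) (b : 𝒯.TCatStr Y) (f : X → Y) : Prop :=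
  ∀ (A Z : Type u) (as : 𝒯.TCatStr A) (cs : 𝒯.TCatStr Z) (h : A → X)
    (ψ : T A → Z → V) (g : Z → X),
    IsTFunctor as a h → 𝒯.IsTModRel as.rel cs.rel ψ → 𝒯.InhabitedMod ψ →
      IsTFunctor cs a g → IsColimit a h ψ g → IsColimit b (f ∘ h) ψ (f ∘ g)

/-! Since `1_X ≤ g·f` and `f·g ≤ 1_Y`, the `𝒯`-functors `f·g·f` and `f` are equivalent, hence
equal as `Y` is L-separated. Then `f·g = 1_Y` follows from `f` being epi (cancel `f` in
`(f·g)·f = 1_Y·f`) or from a section `s` of `f` (`f·g = f·g·f·s = f·s`); dually for `g·f = 1_X`.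
Conversely `f·g = 1_Y` makes `f` surjective and `g·f = 1_X` makes it injective. -/

theorem tens_le_tens_right {u v w : V} (h : v ≤ w) : 𝒯.tens u v ≤ 𝒯.tens u w := by
  have hsup : 𝒯.tens u w = ⨆ z ∈ ({v, w} : Set V), 𝒯.tens u z := by
    rw [← 𝒯.tens_sSup, sSup_pair, sup_eq_right.mpr h]
  exact hsup ▸ le_biSup (𝒯.tens u) (Set.mem_insert v {w})

theorem tens_le_tens {u u' v v' : V} (hu : u ≤ u') (hv : v ≤ v') :
    𝒯.tens u v ≤ 𝒯.tens u' v' := by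
  refine (tens_le_tens_right hv).trans ?_
  rw [𝒯.tens_comm u, 𝒯.tens_comm u']
  exact tens_le_tens_right hu

theorem tens_unit (u : V) : 𝒯.tens u 𝒯.unit = u := by
  rw [𝒯.tens_comm, 𝒯.unit_tens]

theorem le_Txi_e {X Y : Type u} (r : X → Y → V) (x : X) (y : Y) :
    r x y ≤ 𝒯.Txi r (𝒯.e x) (𝒯.e y) :=
  le_iSup_of_le ⟨𝒯.e (x, y), 𝒯.e_nat _ _, 𝒯.e_nat _ _⟩ (by rw [𝒯.e_nat, 𝒯.xi_e])

theorem tens_Txi_le_kleisli {X Y Z : Type u} (β : T Y → Z → V) (α : T X → Y → V)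
    (𝔛 : T (T X)) (𝔶 : T Y) (z : Z) :
    𝒯.tens (𝒯.Txi α 𝔛 𝔶) (β 𝔶 z) ≤ 𝒯.kleisli β α (𝒯.m 𝔛) z :=
  le_iSup₂_of_le (⟨𝔛, rfl⟩ : {𝔛' : T (T X) // 𝒯.m 𝔛' = 𝒯.m 𝔛}) 𝔶 le_rfl

theorem TCatStr.rel_le_rel_of_unit_le {Z : Type u} (c : 𝒯.TCatStr Z) {z z' : Z}
    (h : 𝒯.unit ≤ c.rel (𝒯.e z) z') (𝔷 : T Z) : c.rel 𝔷 z ≤ c.rel 𝔷 z' :=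
  calc c.rel 𝔷 z = 𝒯.tens (c.rel 𝔷 z) 𝒯.unit := (tens_unit _).symm
    _ ≤ 𝒯.tens (𝒯.Txi c.rel (𝒯.e 𝔷) (𝒯.e z)) (c.rel (𝒯.e z) z') :=
        tens_le_tens (le_Txi_e _ _ _) h
    _ ≤ 𝒯.kleisli c.rel c.rel (𝒯.m (𝒯.e 𝔷)) z' := tens_Txi_le_kleisli _ _ _ _ _
    _ = 𝒯.kleisli c.rel c.rel 𝔷 z' := by rw [𝒯.m_e]
    _ ≤ c.rel 𝔷 z' := c.comp 𝔷 z'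

theorem IsTFunctor.id {Z : Type u} (c : 𝒯.TCatStr Z) : IsTFunctor c c (id : Z → Z) := by
  intro 𝔷 z
  rw [𝒯.map_id]
  exact le_rfl

theorem IsTFunctor.comp {X Y Z : Type u} {a : 𝒯.TCatStr X} {b : 𝒯.TCatStr Y}
    {c : 𝒯.TCatStr Z} {h : Y → Z} {f : X → Y}
    (hh : IsTFunctor b c h) (hf : IsTFunctor a b f) : IsTFunctor a c (h ∘ f) := by
  intro 𝔵 x
  rw [𝒯.map_comp]
  exact (hf 𝔵 x).trans (hh _ _)

theorem IsTFunctor.unit_le_rel_e {X Y : Type u} {a : 𝒯.TCatStr X} {b : 𝒯.TCatStr Y}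
    {f : X → Y} (hf : IsTFunctor a b f) {x x' : X} (h : 𝒯.unit ≤ a.rel (𝒯.e x) x') :
    𝒯.unit ≤ b.rel (𝒯.e (f x)) (f x') :=
  h.trans ((hf _ _).trans_eq (by rw [𝒯.e_nat]))

theorem IsAdjunction.funEquiv_comp_comp {X Y : Type u} {a : 𝒯.TCatStr X}
    {b : 𝒯.TCatStr Y} {f : X → Y} {g : Y → X} (adj : IsAdjunction a b f g)
    (hf : IsTFunctor a b f) : FunEquiv b (f ∘ g ∘ f) f := fun 𝔶 x =>
  le_antisymm (adj.2 𝔶 (f x))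
    (b.rel_le_rel_of_unit_le (hf.unit_le_rel_e ((a.le_refl x).trans (adj.1 _ x))) 𝔶)

theorem IsAdjunction.comp_comp_eq {X Y : Type u} {a : 𝒯.TCatStr X} {b : 𝒯.TCatStr Y}
    (hb : Separated b) {f : X → Y} {g : Y → X} (hf : IsTFunctor a b f)
    (hg : IsTFunctor b a g) (adj : IsAdjunction a b f g) : f ∘ g ∘ f = f :=
  hb X a _ f (hf.comp (hg.comp hf)) hf (adj.funEquiv_comp_comp hf)

theorem comp_eq_id_of_section {X Y : Type u} {f : X → Y} {g s : Y → X}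
    (hfgf : f ∘ g ∘ f = f) (hs : f ∘ s = id) : f ∘ g = id :=
  calc f ∘ g = (f ∘ g ∘ f) ∘ s := by rw [Function.comp_assoc, Function.comp_assoc, hs]; rfl
    _ = id := by rw [hfgf, hs]

theorem comp_eq_id_of_retraction {X Y : Type u} {f : X → Y} {g r : Y → X}
    (hfgf : f ∘ g ∘ f = f) (hr : r ∘ f = id) : g ∘ f = id :=
  calc g ∘ f = r ∘ f ∘ g ∘ f := by rw [← Function.comp_assoc r f, hr]; rfl
    _ = id := by rw [hfgf, hr]

/-- Lemma 4.4. Let `f : X → Y` and `g : Y → X` be `𝒯`-functors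
between L-separated `𝒯`-categories with `f ⊣ g`. Then: (1) `f` is an epimorphism in
`Cat_sep 𝒯` iff `f·g = 1_Y` iff `f` is a split epimorphism; (2) `f` is a monomorphism
in `Cat_sep 𝒯` iff `g·f = 1_X` iff `f` is a split monomorphism. -/
theorem statement17 (𝒯 : TopTheory V T) {X Y : Type u}
    (a : 𝒯.TCatStr X) (b : 𝒯.TCatStr Y) (ha : Separated a) (hb : Separated b)
    (f : X → Y) (g : Y → X) (hf : IsTFunctor a b f) (hg : IsTFunctor b a g)
    (adj : IsAdjunction a b f g) :
    ((∀ (Z : Type u) (c : 𝒯.TCatStr Z), Separated c →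
        ∀ h k : Y → Z, IsTFunctor b c h → IsTFunctor b c k → h ∘ f = k ∘ f → h = k) ↔
      f ∘ g = id) ∧
    ((f ∘ g = id) ↔ ∃ s : Y → X, IsTFunctor b a s ∧ f ∘ s = id) ∧
    ((∀ (Z : Type u) (c : 𝒯.TCatStr Z), Separated c →
        ∀ h k : Z → X, IsTFunctor c a h → IsTFunctor c a k → f ∘ h = f ∘ k → h = k) ↔
      g ∘ f = id) ∧
    ((g ∘ f = id) ↔ ∃ r : Y → X, IsTFunctor b a r ∧ r ∘ f = id) := by
  have hfgf : f ∘ g ∘ f = f := adj.comp_comp_eq hb hf hg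
  refine ⟨⟨fun epi => ?_, fun hfg Z c _ h k _ _ hhk => ?_⟩,
    ⟨fun hfg => ⟨g, hg, hfg⟩, fun ⟨s, _, hs⟩ => comp_eq_id_of_section hfgf hs⟩,
    ⟨fun mono => ?_, fun hgf Z c _ h k _ _ hhk => ?_⟩,
    ⟨fun hgf => ⟨g, hg, hgf⟩, fun ⟨r, _, hr⟩ => comp_eq_id_of_retraction hfgf hr⟩⟩
  · exact epi Y b hb (f ∘ g) id (hf.comp hg) (IsTFunctor.id b) hfgf
  · exact (show Function.LeftInverse f g from congrFun hfg).surjective.injective_comp_right hhk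
  · exact mono X a ha (g ∘ f) id (hg.comp hf) (IsTFunctor.id a) hfgf
  · exact (show Function.LeftInverse g f from congrFun hgf).injective.comp_left hhk

end TopTheory

end Paper
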